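/- The joint softmax strategy of m independent players is (√|B|/τ)-Lipschitz in L1: if π(z)(b) = Π_{i=1}^m σ(q^i)(b^i) where σ is the softmax with temperature τ and z = (q^1, ..., q^m), then ‖π(z) - π(z̄)‖₁ ≤ (√|B|/τ)·‖z - z̄‖₁, where ‖z - z̄‖₁ = Σ_i ‖q^i - q̄^i‖₁ and |B| = Π_i |B^i|. -/

import Mathlib

/-!
For fixed `b, c`, the numbers `σ(q)_b σ(p)_c` and `σ(p)_b σ(q)_c` have logarithms differing by
`((q_b - p_b) - (q_c - p_c)) / τ`, since the normalising constants cancel. Writing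
`σ(q)_b - σ(p)_b = ∑_c (σ(q)_b σ(p)_c - σ(p)_b σ(q)_c)` and bounding each term by the inequality
between the logarithmic and the arithmetic mean shows that softmax is even `(1/τ)`-Lipschitz from
`ℓ¹` to `ℓ¹`. The `ℓ¹` distance between two product distributions is at most the sum of the
distances between their factors, and `1 ≤ √|B|`.
-/

noncomputable def softmax {B : Type*} [Fintype B] (τ : ℝ) (q : B → ℝ) (b : B) : ℝ :=
  Real.exp (q b / τ) / ∑ c, Real.exp (q c / τ)

open Real Finset

theorem exp_sub_one_le_mul_exp_add_one_div_two {t : ℝ} (ht : 0 ≤ t) :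
    exp t - 1 ≤ t * (exp t + 1) / 2 := by
  let g : ℝ → ℝ := fun s => s * (exp s + 1) / 2 - (exp s - 1)
  have hg : ∀ s, HasDerivAt g ((1 - exp s + s * exp s) / 2) s := fun s =>
    ((((hasDerivAt_id' s).fun_mul ((hasDerivAt_exp s).add_const 1)).div_const 2).fun_sub
      ((hasDerivAt_exp s).sub_const 1)).congr_deriv (by ring)
  have hmono : Monotone g := monotone_of_deriv_nonneg (fun s => (hg s).differentiableAt)
    fun s => by
      have hexp := mul_le_mul_of_nonneg_right (add_one_le_exp (-s)) (exp_pos s).le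
      rw [← exp_add, neg_add_cancel, exp_zero] at hexp
      rw [(hg s).deriv]
      linarith
  have hg0 := hmono ht
  simp only [g, exp_zero] at hg0
  linarith

theorem sub_le_add_div_two_mul_log_sub {a b : ℝ} (hb : 0 < b) (hba : b ≤ a) :
    a - b ≤ (a + b) / 2 * (log a - log b) := by
  have ha : 0 < a := hb.trans_le hba
  have h := exp_sub_one_le_mul_exp_add_one_div_two (sub_nonneg.2 (log_le_log hb hba))
  rw [exp_sub, exp_log ha, exp_log hb] at h
  have := mul_le_mul_of_nonneg_left h hb.le
  field_simp at this
  linarith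

theorem abs_sub_le_add_div_two_mul_abs_log_sub {a b : ℝ} (ha : 0 < a) (hb : 0 < b) :
    |a - b| ≤ (a + b) / 2 * |log a - log b| := by
  rcases le_total b a with hba | hab
  · rw [abs_of_nonneg (sub_nonneg.2 hba), abs_of_nonneg (sub_nonneg.2 (log_le_log hb hba))]
    exact sub_le_add_div_two_mul_log_sub hb hba
  · rw [abs_sub_comm, abs_sub_comm (log a), add_comm,
      abs_of_nonneg (sub_nonneg.2 hab), abs_of_nonneg (sub_nonneg.2 (log_le_log ha hab))]
    exact sub_le_add_div_two_mul_log_sub ha hab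

theorem sum_sum_mul_mul_abs_sub_le {β : Type*} [Fintype β] {s t : β → ℝ}
    (hs : ∀ b, 0 ≤ s b) (hs1 : ∑ b, s b = 1) (ht : ∀ b, 0 ≤ t b) (ht1 : ∑ b, t b = 1)
    (v : β → ℝ) :
    ∑ b, ∑ c, s b * t c * |v b - v c| ≤ ∑ b, |v b| := by
  classical
  have hinner : ∀ b, ∑ c, t c * |v b - v c| ≤ (1 - 2 * t b) * |v b| + ∑ c, t c * |v c| := by
    intro b
    -- the diagonal term vanishes, and off the diagonal `|v b - v c| ≤ |v b| + |v c|`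
    calc ∑ c, t c * |v b - v c| = ∑ c ∈ univ.erase b, t c * |v b - v c| :=
          (sum_erase _ (by simp)).symm
      _ ≤ ∑ c ∈ univ.erase b, t c * (|v b| + |v c|) :=
          sum_le_sum fun c _ => mul_le_mul_of_nonneg_left (abs_sub _ _) (ht c)
      _ = (1 - 2 * t b) * |v b| + ∑ c, t c * |v c| := by
          rw [sum_congr rfl fun c _ => mul_add (t c) _ _, sum_add_distrib, ← sum_mul,
            sum_erase_eq_sub (mem_univ b), sum_erase_eq_sub (mem_univ b), ht1]
          ring
  calc ∑ b, ∑ c, s b * t c * |v b - v c|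
      ≤ ∑ b, s b * ((1 - 2 * t b) * |v b| + ∑ c, t c * |v c|) := by
        refine sum_le_sum fun b _ => ?_
        simp_rw [mul_assoc, ← mul_sum]
        exact mul_le_mul_of_nonneg_left (hinner b) (hs b)
    _ = ∑ b, (s b + t b - 2 * (s b * t b)) * |v b| := by
        simp_rw [mul_add, sum_add_distrib, ← sum_mul, hs1, one_mul, ← sum_add_distrib]
        exact sum_congr rfl fun b _ => by ring
    _ ≤ ∑ b, |v b| := sum_le_sum fun b _ => by
        have hsb : s b ≤ 1 := hs1 ▸ single_le_sum (fun c _ => hs c) (mem_univ b)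
        have htb : t b ≤ 1 := ht1 ▸ single_le_sum (fun c _ => ht c) (mem_univ b)
        refine mul_le_of_le_one_left (abs_nonneg _) ?_
        nlinarith [mul_nonneg (hs b) (ht b), mul_nonneg (sub_nonneg.2 hsb) (sub_nonneg.2 htb)]

section Softmax

variable {β : Type*} [Fintype β]

theorem softmax_pos [Nonempty β] (τ : ℝ) (q : β → ℝ) (b : β) : 0 < softmax τ q b :=
  div_pos (exp_pos _) (sum_pos (fun _ _ => exp_pos _) univ_nonempty)

theorem sum_softmax [Nonempty β] (τ : ℝ) (q : β → ℝ) : ∑ b, softmax τ q b = 1 := by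
  simp only [softmax]
  rw [← sum_div, div_self (sum_pos (fun _ _ => exp_pos _) univ_nonempty).ne']

theorem log_softmax [Nonempty β] (τ : ℝ) (q : β → ℝ) (b : β) :
    log (softmax τ q b) = q b / τ - log (∑ c, exp (q c / τ)) := by
  rw [softmax, log_div (exp_pos _).ne' (sum_pos (fun _ _ => exp_pos _) univ_nonempty).ne',
    log_exp]

theorem sum_abs_softmax_sub_softmax_le [Nonempty β] {τ : ℝ} (hτ : 0 < τ) (q p : β → ℝ) :
    ∑ b, |softmax τ q b - softmax τ p b| ≤ (∑ b, |q b - p b|) / τ := by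
  set s := softmax τ q
  set t := softmax τ p
  set v := fun b => q b - p b
  have hpair : ∀ b c,
      |s b * t c - t b * s c| ≤ (s b * t c + t b * s c) * |v b - v c| / (2 * τ) := by
    intro b c
    have hlog : log (s b * t c) - log (t b * s c) = (v b - v c) / τ := by
      simp only [s, t, v, log_mul (softmax_pos ..).ne' (softmax_pos ..).ne', log_softmax]
      ring
    have hmean := abs_sub_le_add_div_two_mul_abs_log_sub
      (mul_pos (softmax_pos τ q b) (softmax_pos τ p c))
      (mul_pos (softmax_pos τ p b) (softmax_pos τ q c))
    rw [hlog, abs_div, abs_of_pos hτ] at hmean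
    convert hmean using 1
    ring
  calc ∑ b, |s b - t b| = ∑ b, |∑ c, (s b * t c - t b * s c)| := by
        refine sum_congr rfl fun b _ => ?_
        rw [sum_sub_distrib, ← mul_sum, ← mul_sum, sum_softmax, sum_softmax, mul_one, mul_one]
    _ ≤ ∑ b, ∑ c, (s b * t c + t b * s c) * |v b - v c| / (2 * τ) :=
        sum_le_sum fun b _ => (abs_sum_le_sum_abs _ _).trans (sum_le_sum fun c _ => hpair b c)
    _ = (∑ b, ∑ c, s b * t c * |v b - v c| + ∑ b, ∑ c, t b * s c * |v b - v c|) / (2 * τ) := by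
        simp only [← sum_div, add_mul, sum_add_distrib]
    _ ≤ (∑ b, |v b| + ∑ b, |v b|) / (2 * τ) := by
        gcongr (?_ + ?_) / _
        · exact sum_sum_mul_mul_abs_sub_le (fun b => (softmax_pos τ q b).le) (sum_softmax τ q)
            (fun b => (softmax_pos τ p b).le) (sum_softmax τ p) v
        · exact sum_sum_mul_mul_abs_sub_le (fun b => (softmax_pos τ p b).le) (sum_softmax τ p)
            (fun b => (softmax_pos τ q b).le) (sum_softmax τ q) v
    _ = (∑ b, |q b - p b|) / τ := by
        field_simp
        ring

end Softmax

theorem sum_sum_abs_mul_sub_mul_le {α β : Type*} [Fintype α] [Fintype β] {f g : α → ℝ}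
    {F G : β → ℝ} (hf : ∀ x, 0 ≤ f x) (hf1 : ∑ x, f x = 1) (hG : ∀ y, 0 ≤ G y)
    (hG1 : ∑ y, G y = 1) :
    ∑ x, ∑ y, |f x * F y - g x * G y| ≤ ∑ x, |f x - g x| + ∑ y, |F y - G y| := by
  calc ∑ x, ∑ y, |f x * F y - g x * G y|
      ≤ ∑ x, ∑ y, (f x * |F y - G y| + |f x - g x| * G y) :=
        sum_le_sum fun x _ => sum_le_sum fun y _ => by
          rw [show f x * F y - g x * G y = f x * (F y - G y) + (f x - g x) * G y by ring]
          refine (abs_add_le _ _).trans_eq ?_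
          rw [abs_mul, abs_mul, abs_of_nonneg (hf x), abs_of_nonneg (hG y)]
    _ = (∑ x, f x) * ∑ y, |F y - G y| + (∑ x, |f x - g x|) * ∑ y, G y := by
        simp only [sum_add_distrib, ← mul_sum, ← sum_mul]
    _ = ∑ x, |f x - g x| + ∑ y, |F y - G y| := by
        rw [hf1, hG1, one_mul, mul_one, add_comm]

theorem sum_abs_prod_sub_prod_le {m : ℕ} {B : Fin m → Type*} [∀ i, Fintype (B i)]
    {f g : ∀ i, B i → ℝ} (hf : ∀ i x, 0 ≤ f i x) (hf1 : ∀ i, ∑ x, f i x = 1)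
    (hg : ∀ i x, 0 ≤ g i x) (hg1 : ∀ i, ∑ x, g i x = 1) :
    ∑ b : ∀ i, B i, |∏ i, f i (b i) - ∏ i, g i (b i)| ≤ ∑ i, ∑ x, |f i x - g i x| := by
  induction m with
  | zero => simp
  | succ n ih =>
    have hg_tail : ∑ y : ∀ i : Fin n, B i.succ, ∏ i, g i.succ (y i) = 1 := by
      classical
      rw [← Fintype.prod_sum (fun i : Fin n => g i.succ)]
      simp [hg1]
    rw [← (Fin.consEquiv B).sum_comp, Fintype.sum_prod_type, Fin.sum_univ_succ]
    simp only [Fin.prod_univ_succ, Fin.consEquiv_apply, Fin.cons_zero, Fin.cons_succ]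
    exact (sum_sum_abs_mul_sub_mul_le (hf 0) (hf1 0)
      (fun y => prod_nonneg fun i _ => hg i.succ (y i)) hg_tail).trans
      (add_le_add le_rfl (ih (fun i => hf i.succ) (fun i => hf1 i.succ) (fun i => hg i.succ)
        (fun i => hg1 i.succ)))

/-- The joint softmax strategy of m independent players is (√|B|/τ)-Lipschitz
in L1, where |B| = ∏ᵢ |Bⁱ| and ‖z - z̄‖₁ = ∑ᵢ ‖qⁱ - q̄ⁱ‖₁. -/
theorem joint_softmax_lipschitz {m : ℕ} (B : Fin m → Type*)
    [∀ i, Fintype (B i)] [∀ i, Nonempty (B i)]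
    {τ : ℝ} (hτ : 0 < τ) (q qb : (i : Fin m) → B i → ℝ) :
    ∑ b : (i : Fin m) → B i, |(∏ i, softmax τ (q i) (b i)) - ∏ i, softmax τ (qb i) (b i)|
      ≤ (Real.sqrt (Fintype.card ((i : Fin m) → B i)) / τ) *
          ∑ i, ∑ x, |q i x - qb i x| := by
  have hprod := sum_abs_prod_sub_prod_le (fun i x => (softmax_pos τ (q i) x).le)
    (fun i => sum_softmax τ (q i)) (fun i x => (softmax_pos τ (qb i) x).le)
    (fun i => sum_softmax τ (qb i))
  have hfactors : ∑ i, ∑ x, |softmax τ (q i) x - softmax τ (qb i) x|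
      ≤ (∑ i, ∑ x, |q i x - qb i x|) / τ := by
    rw [sum_div]
    exact sum_le_sum fun i _ => sum_abs_softmax_sub_softmax_le hτ (q i) (qb i)
  have hcard : 1 ≤ √(Fintype.card ((i : Fin m) → B i) : ℝ) :=
    one_le_sqrt.2 (Nat.one_le_cast.2 Fintype.card_pos)
  calc _ ≤ (∑ i, ∑ x, |q i x - qb i x|) / τ := hprod.trans hfactors
    _ ≤ _ := by
      rw [div_mul_eq_mul_div, mul_div_assoc]
      exact le_mul_of_one_le_left (div_nonneg (by positivity) hτ.le) hcard
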